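/- arXiv:1302.0616 — 6 statements merged into one kernel-verified Lean document; each statement's English description precedes it below -/
import Mathlib

section
/- Let a, b ∈ ℝ with b ≠ 0 and a < b < -a, and set α = √(b−a), β = √(−a−b). If a twice differentiable function x : ℝ → ℝ satisfies the homogeneous equation x''(t) + a·x(t) + b·x(−t) = 0 for all t ∈ ℝ and x is bounded on ℝ, then x ≡ 0. -/
/-!
The even part `x t + x (-t)` and the odd part `x t - x (-t)` decouple the equation into
`y'' = -(a + b) y` and `y'' = (b - a) y`, both with a positive coefficient `c = k ^ 2`.
For such `y`, the functions `y' + k y` and `y' - k y` are multiples of `exp (k t)` and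
`exp (-k t)`, so `y` is a combination of these two exponentials, which is bounded only when
both coefficients vanish.
-/

open Real Filter

theorem HasDerivAt.comp_neg {𝕜 F : Type*} [NontriviallyNormedField 𝕜] [NormedAddCommGroup F]
    [NormedSpace 𝕜 F] {f : 𝕜 → F} {f' : F} {x : 𝕜} (hf : HasDerivAt f f' (-x)) :
    HasDerivAt (fun s => f (-s)) (-f') x := by
  simpa [Function.comp_def] using hf.scomp x (hasDerivAt_neg x)

theorem eq_mul_exp_of_hasDerivAt_mul {f : ℝ → ℝ} {c : ℝ} (hf : ∀ t, HasDerivAt f (c * f t) t)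
    (t : ℝ) : f t = f 0 * exp (c * t) := by
  have hderiv : ∀ s, HasDerivAt (fun s => f s * exp (-(c * s))) 0 s := fun s => by
    refine ((hf s).fun_mul (((hasDerivAt_id s).const_mul c).fun_neg.exp)).congr_deriv ?_
    ring
  have hconst := is_const_of_deriv_eq_zero (fun s => (hderiv s).differentiableAt)
    (fun s => (hderiv s).deriv) t 0
  simp only [mul_zero, neg_zero, exp_zero, mul_one] at hconst
  rw [← hconst, mul_assoc, ← exp_add, neg_add_cancel, exp_zero, mul_one]

theorem eq_zero_of_abs_mul_exp_le {A k C : ℝ} (hk : 0 < k)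
    (h : ∀ t ≥ 0, |A * exp (k * t)| ≤ C) : A = 0 := by
  by_contra hA
  have hgrow : Tendsto (fun t => |A| * exp (k * t)) atTop atTop :=
    (tendsto_exp_atTop.comp (tendsto_id.const_mul_atTop hk)).const_mul_atTop (abs_pos.2 hA)
  obtain ⟨t, ht, htC⟩ := ((eventually_ge_atTop 0).and (hgrow.eventually_gt_atTop C)).exists
  have := h t ht
  rw [abs_mul, abs_of_pos (exp_pos _)] at this
  linarith

theorem eq_zero_of_hasDerivAt_second_eq_pos_mul_of_abs_le {y y' : ℝ → ℝ} {c M : ℝ} (hc : 0 < c)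
    (hy : ∀ t, HasDerivAt y (y' t) t) (hy' : ∀ t, HasDerivAt y' (c * y t) t)
    (hM : ∀ t, |y t| ≤ M) (t : ℝ) : y t = 0 := by
  set k := √c
  have hk : 0 < k := sqrt_pos.2 hc
  have hkk : k * k = c := mul_self_sqrt hc.le
  have hgrow := eq_mul_exp_of_hasDerivAt_mul (f := fun t => y' t + k * y t) (c := k) fun t => by
    refine ((hy' t).fun_add ((hy t).const_mul k)).congr_deriv ?_
    rw [← hkk]; ring
  have hdecay := eq_mul_exp_of_hasDerivAt_mul (f := fun t => y' t - k * y t) (c := -k) fun t => by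
    refine ((hy' t).fun_sub ((hy t).const_mul k)).congr_deriv ?_
    rw [← hkk]; ring
  set A := y' 0 + k * y 0
  set B := y' 0 - k * y 0
  have hy_eq : ∀ t, 2 * k * y t = A * exp (k * t) - B * exp (-k * t) := fun t => by
    linarith [hgrow t, hdecay t]
  have hky : ∀ t, |2 * k * y t| ≤ 2 * k * M := fun t => by
    rw [abs_mul, abs_of_pos (by positivity : 0 < 2 * k)]
    exact mul_le_mul_of_nonneg_left (hM t) (by positivity)
  have hA : A = 0 := eq_zero_of_abs_mul_exp_le (C := 2 * k * M + |B|) hk fun t ht => by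
    have hdecay_le : |B * exp (-k * t)| ≤ |B| := by
      rw [abs_mul, abs_of_pos (exp_pos _)]
      exact mul_le_of_le_one_right (abs_nonneg B) (exp_le_one_iff.2 (by nlinarith))
    calc |A * exp (k * t)| = |2 * k * y t + B * exp (-k * t)| := by rw [hy_eq]; ring_nf
      _ ≤ 2 * k * M + |B| := (abs_add_le _ _).trans (add_le_add (hky t) hdecay_le)
  have hB : B = 0 := eq_zero_of_abs_mul_exp_le (C := 2 * k * M) hk fun s _ => by
    calc |B * exp (k * s)| = |2 * k * y (-s)| := by
          rw [hy_eq, hA, ← abs_neg]; ring_nf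
      _ ≤ 2 * k * M := hky (-s)
  have := hy_eq t
  rw [hA, hB] at this
  simpa [hk.ne'] using this

theorem homogeneous_bounded_is_zero_general (a b : ℝ) (hab : a < b) (hba : b < -a)
    (x : ℝ → ℝ) (hx1 : Differentiable ℝ x) (hx2 : Differentiable ℝ (deriv x))
    (heq : ∀ t : ℝ, deriv (deriv x) t + a * x t + b * x (-t) = 0)
    (hbdd : ∃ M : ℝ, ∀ t : ℝ, |x t| ≤ M) :
    ∀ t : ℝ, x t = 0 := by
  obtain ⟨M, hM⟩ := hbdd
  have hx : ∀ t, HasDerivAt x (deriv x t) t := fun t => (hx1 t).hasDerivAt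
  have hx' : ∀ t, HasDerivAt (deriv x) (deriv (deriv x) t) t := fun t => (hx2 t).hasDerivAt
  have hxr : ∀ t, HasDerivAt (fun s => x (-s)) (-deriv x (-t)) t := fun t => (hx (-t)).comp_neg
  have hxr' : ∀ t, HasDerivAt (fun s => -deriv x (-s)) (deriv (deriv x) (-t)) t := fun t => by
    simpa using (hx' (-t)).comp_neg.fun_neg
  have heven := eq_zero_of_hasDerivAt_second_eq_pos_mul_of_abs_le (c := -(a + b)) (M := 2 * M)
    (by linarith) (fun t => (hx t).fun_add (hxr t))
    (fun t => ((hx' t).fun_add (hxr' t)).congr_deriv (by linarith [heq t, neg_neg t ▸ heq (-t)]))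
    (fun t => (abs_add_le _ _).trans (by linarith [hM t, hM (-t)]))
  have hodd := eq_zero_of_hasDerivAt_second_eq_pos_mul_of_abs_le (c := b - a) (M := 2 * M)
    (by linarith) (fun t => (hx t).fun_sub (hxr t))
    (fun t => ((hx' t).fun_sub (hxr' t)).congr_deriv (by linarith [heq t, neg_neg t ▸ heq (-t)]))
    (fun t => (abs_sub _ _).trans (by linarith [hM t, hM (-t)]))
  intro t
  linarith [heven t, hodd t]

theorem homogeneous_bounded_is_zero (a b : ℝ) (hb : b ≠ 0) (hab : a < b) (hba : b < -a)
    (x : ℝ → ℝ) (hx1 : Differentiable ℝ x) (hx2 : Differentiable ℝ (deriv x))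
    (heq : ∀ t : ℝ, deriv (deriv x) t + a * x t + b * x (-t) = 0)
    (hbdd : ∃ M : ℝ, ∀ t : ℝ, |x t| ≤ M) :
    ∀ t : ℝ, x t = 0 :=
  homogeneous_bounded_is_zero_general a b hab hba x hx1 hx2 heq hbdd
end

section
/- Let a, b ∈ ℝ with b ≠ 0 and a < b < -a. Then for any continuous bounded g : ℝ → ℝ there is at most one bounded twice differentiable solution x : ℝ → ℝ of x''(t) + a·x(t) + b·x(−t) = g(t) on ℝ. -/
/-!
The difference `y` of two bounded solutions is a bounded solution of `y'' + a y + b y(-·) = 0`,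
and its even and odd parts `y t ± y (-t)` decouple into `u'' = c u` with `c = -(a ± b) > 0`.
A bounded solution of `u'' = c u` with `c > 0` vanishes: `u ^ 2` is convex, since
`(u ^ 2)'' = 2 u' ^ 2 + 2 c u ^ 2 ≥ 0`, and bounded, so its derivative `2 u u'` vanishes
identically; differentiating once more gives `u' ^ 2 + c u ^ 2 = 0`.
-/

open Set

theorem ConvexOn.le_add_mul_sub_of_hasDerivAt {f : ℝ → ℝ} {f' x : ℝ} (hf : ConvexOn ℝ univ f)
    (hx : HasDerivAt f f' x) (y : ℝ) : f x + f' * (y - x) ≤ f y := by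
  rcases lt_trichotomy x y with hxy | rfl | hyx
  · have := hf.le_slope_of_hasDerivAt (mem_univ x) (mem_univ y) hxy hx
    rw [slope_def_field, le_div_iff₀ (sub_pos.2 hxy)] at this
    linarith
  · simp
  · have := hf.slope_le_of_hasDerivAt (mem_univ y) (mem_univ x) hyx hx
    rw [slope_def_field, div_le_iff₀ (sub_pos.2 hyx)] at this
    linarith

theorem ConvexOn.hasDerivAt_eq_zero_of_bddAbove {f : ℝ → ℝ} {f' x : ℝ} (hf : ConvexOn ℝ univ f)
    (hbdd : BddAbove (range f)) (hx : HasDerivAt f f' x) : f' = 0 := by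
  obtain ⟨M, hM⟩ := hbdd
  by_contra hf'
  have hy := hf.le_add_mul_sub_of_hasDerivAt hx (x + (M - f x + 1) / f')
  rw [add_sub_cancel_left, mul_div_cancel₀ _ hf'] at hy
  linarith [hM (mem_range_self (x + (M - f x + 1) / f'))]

theorem eq_zero_of_deriv_deriv_eq_mul_of_bounded {c : ℝ} (hc : 0 < c) {u : ℝ → ℝ}
    (hu : Differentiable ℝ u) (hu' : Differentiable ℝ (deriv u))
    (hode : ∀ t, deriv (deriv u) t = c * u t) (hbdd : ∃ M, ∀ t, |u t| ≤ M) : u = 0 := by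
  have hsq' (t : ℝ) : HasDerivAt (fun t ↦ u t ^ 2) (2 * u t * deriv u t) t := by
    simpa using (hu t).hasDerivAt.fun_pow 2
  have hsq'' (t : ℝ) : HasDerivAt (fun t ↦ 2 * u t * deriv u t)
      (2 * deriv u t ^ 2 + 2 * c * u t ^ 2) t := by
    refine (((hu t).hasDerivAt.const_mul 2).fun_mul (hu' t).hasDerivAt).congr_deriv ?_
    rw [hode]
    ring
  have hconv : ConvexOn ℝ univ (fun t ↦ u t ^ 2) :=
    convexOn_of_hasDerivWithinAt2_nonneg convex_univ (hu.continuous.pow 2).continuousOn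
      (fun t _ ↦ (hsq' t).hasDerivWithinAt) (fun t _ ↦ (hsq'' t).hasDerivWithinAt)
      (fun t _ ↦ by positivity)
  have hbdd' : BddAbove (range fun t ↦ u t ^ 2) := by
    obtain ⟨M, hM⟩ := hbdd
    refine ⟨M ^ 2, forall_mem_range.2 fun t ↦ ?_⟩
    simpa only [sq_abs] using pow_le_pow_left₀ (abs_nonneg _) (hM t) 2
  have hsq'_zero : (fun t ↦ 2 * u t * deriv u t) = 0 :=
    funext fun t ↦ hconv.hasDerivAt_eq_zero_of_bddAbove hbdd' (hsq' t)
  funext t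
  have h := (hsq'' t).unique (by rw [hsq'_zero]; exact hasDerivAt_const t 0)
  have : u t ^ 2 = 0 := by nlinarith [sq_nonneg (deriv u t), sq_nonneg (u t)]
  simpa using this

section Reflection

variable {y : ℝ → ℝ}

theorem deriv_add_const_mul_comp_neg (hy : Differentiable ℝ y) (e : ℝ) :
    deriv (fun t ↦ y t + e * y (-t)) = fun t ↦ deriv y t + -e * deriv y (-t) := by
  funext t
  have hyneg : Differentiable ℝ (fun t ↦ y (-t)) := hy.comp differentiable_neg
  rw [deriv_fun_add (hy t) ((hyneg.const_mul e) t), deriv_const_mul e (hyneg t), deriv_comp_neg]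
  ring

theorem deriv_deriv_add_const_mul_comp_neg (hy : Differentiable ℝ y)
    (hy' : Differentiable ℝ (deriv y)) (e : ℝ) :
    deriv (deriv (fun t ↦ y t + e * y (-t))) =
      fun t ↦ deriv (deriv y) t + e * deriv (deriv y) (-t) := by
  rw [deriv_add_const_mul_comp_neg hy, deriv_add_const_mul_comp_neg hy', neg_neg]

theorem deriv_deriv_add_const_mul_comp_neg_of_homogeneous {a b e : ℝ} (he : |e| = 1)
    (hy : Differentiable ℝ y) (hy' : Differentiable ℝ (deriv y))
    (hode : ∀ t, deriv (deriv y) t + a * y t + b * y (-t) = 0) (t : ℝ) :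
    deriv (deriv (fun t ↦ y t + e * y (-t))) t = -(a + e * b) * (y t + e * y (-t)) := by
  have he2 : e ^ 2 = 1 := by rw [← sq_abs, he, one_pow]
  have hode_neg := hode (-t)
  rw [neg_neg] at hode_neg
  rw [deriv_deriv_add_const_mul_comp_neg hy hy']
  linear_combination hode t + e * hode_neg + b * y (-t) * he2

theorem eq_zero_of_bounded_of_deriv_deriv_add_mul_add_mul_comp_neg_eq_zero {a b : ℝ}
    (hab : a < b) (hba : b < -a) (hy : Differentiable ℝ y) (hy' : Differentiable ℝ (deriv y))
    (hbdd : ∃ M, ∀ t, |y t| ≤ M) (hode : ∀ t, deriv (deriv y) t + a * y t + b * y (-t) = 0) :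
    y = 0 := by
  obtain ⟨M, hM⟩ := hbdd
  have hpart {e : ℝ} (he : |e| = 1) (hpos : 0 < -(a + e * b)) :
      (fun t ↦ y t + e * y (-t)) = 0 := by
    refine eq_zero_of_deriv_deriv_eq_mul_of_bounded hpos (by fun_prop)
      (by rw [deriv_add_const_mul_comp_neg hy]; fun_prop)
      (deriv_deriv_add_const_mul_comp_neg_of_homogeneous he hy hy' hode) ⟨M + M, fun t ↦ ?_⟩
    calc |y t + e * y (-t)| ≤ |y t| + |e| * |y (-t)| := by rw [← abs_mul]; exact abs_add_le _ _
      _ ≤ M + M := by rw [he, one_mul]; exact add_le_add (hM t) (hM (-t))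
  have heven := hpart (e := 1) abs_one (by linarith)
  have hodd := hpart (e := -1) (by norm_num) (by linarith)
  funext t
  linarith [congrFun heven t, congrFun hodd t]

end Reflection

theorem bounded_solution_unique_general (a b : ℝ) (hab : a < b) (hba : b < -a)
    (g : ℝ → ℝ)
    (x₁ x₂ : ℝ → ℝ)
    (hx₁d : Differentiable ℝ x₁) (hx₁d2 : Differentiable ℝ (deriv x₁))
    (hx₂d : Differentiable ℝ x₂) (hx₂d2 : Differentiable ℝ (deriv x₂))
    (hx₁bdd : ∃ M : ℝ, ∀ t : ℝ, |x₁ t| ≤ M) (hx₂bdd : ∃ M : ℝ, ∀ t : ℝ, |x₂ t| ≤ M)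
    (heq₁ : ∀ t : ℝ, deriv (deriv x₁) t + a * x₁ t + b * x₁ (-t) = g t)
    (heq₂ : ∀ t : ℝ, deriv (deriv x₂) t + a * x₂ t + b * x₂ (-t) = g t) :
    x₁ = x₂ := by
  have hderiv : deriv (x₁ - x₂) = deriv x₁ - deriv x₂ := funext fun t ↦ deriv_sub (hx₁d t) (hx₂d t)
  have hderiv2 : deriv (deriv (x₁ - x₂)) = deriv (deriv x₁) - deriv (deriv x₂) := by
    rw [hderiv]
    exact funext fun t ↦ deriv_sub (hx₁d2 t) (hx₂d2 t)
  obtain ⟨M₁, hM₁⟩ := hx₁bdd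
  obtain ⟨M₂, hM₂⟩ := hx₂bdd
  refine sub_eq_zero.1 <| eq_zero_of_bounded_of_deriv_deriv_add_mul_add_mul_comp_neg_eq_zero hab hba
    (hx₁d.sub hx₂d) (hderiv ▸ hx₁d2.sub hx₂d2) ⟨M₁ + M₂, fun t ↦ ?_⟩ fun t ↦ ?_
  · exact (abs_sub _ _).trans (add_le_add (hM₁ t) (hM₂ t))
  · simp only [hderiv2, Pi.sub_apply]
    linear_combination heq₁ t - heq₂ t

theorem bounded_solution_unique (a b : ℝ) (hb : b ≠ 0) (hab : a < b) (hba : b < -a)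
    (g : ℝ → ℝ) (hg : Continuous g) (hgbdd : ∃ M : ℝ, ∀ t : ℝ, |g t| ≤ M)
    (x₁ x₂ : ℝ → ℝ)
    (hx₁d : Differentiable ℝ x₁) (hx₁d2 : Differentiable ℝ (deriv x₁))
    (hx₂d : Differentiable ℝ x₂) (hx₂d2 : Differentiable ℝ (deriv x₂))
    (hx₁bdd : ∃ M : ℝ, ∀ t : ℝ, |x₁ t| ≤ M) (hx₂bdd : ∃ M : ℝ, ∀ t : ℝ, |x₂ t| ≤ M)
    (heq₁ : ∀ t : ℝ, deriv (deriv x₁) t + a * x₁ t + b * x₁ (-t) = g t)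
    (heq₂ : ∀ t : ℝ, deriv (deriv x₂) t + a * x₂ t + b * x₂ (-t) = g t) :
    x₁ = x₂ :=
  bounded_solution_unique_general a b hab hba g x₁ x₂ hx₁d hx₁d2 hx₂d hx₂d2 hx₁bdd hx₂bdd heq₁ heq₂
end

section
/- Let a, b ∈ ℝ with b ≠ 0 and a < b < -a, set α = √(b−a), β = √(−a−b), and suppose g : ℝ → ℝ is almost periodic. Then the function x(t) = ∫_t^∞ e^{α(t−s)}(g(s)+g(−s)) ds + ∫_{−∞}^t e^{−α(t−s)}(g(s)+g(−s)) ds + β∫_t^∞ e^{β(t−s)}(−g(s)+g(−s)) ds + β∫_{−∞}^t e^{−β(t−s)}(g(s)−g(−s)) ds is almost periodic; in fact every ε-translation number τ of g satisfies |x(t+τ) − x(t)| ≤ 4(1/α + 1)ε for all t ∈ ℝ. -/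
/-!
Substituting `s = t ± u` writes each of the four integrals as `∫₀^∞ e^{-cu} ψ(t ± u) du`
with `c ∈ {α, β}` and `ψ = ±g ± g(-·)`. An `ε`-translation number of `g` is one of `g(-·)`,
hence a `2ε`-translation number of each `ψ`, and integrating against `e^{-cu}` (total mass
`1/c`) makes it a `2ε/c`-translation number of the integral. Summing, `τ` moves `x` by at most
`2ε/α + 2ε/α + β·2ε/β + β·2ε/β = 4(1/α + 1)ε`; taking `ε` small shows that `x` is almost
periodic, its continuity coming from dominated convergence since `g` is bounded.
-/

open MeasureTheory

def RelativelyDense (S : Set ℝ) : Prop :=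
  ∃ L > 0, ∀ x : ℝ, ∃ τ ∈ S, τ ∈ Set.Icc x (x + L)

def AlmostPeriodic (g : ℝ → ℝ) : Prop :=
  Continuous g ∧ ∀ ε > 0, RelativelyDense {τ : ℝ | ∀ t : ℝ, |g (t + τ) - g t| < ε}

open Set

/-- Non-strict version of the translation numbers in `AlmostPeriodic`: integration preserves `≤`
but not `<`. -/
def IsTranslationNumber (f : ℝ → ℝ) (δ τ : ℝ) : Prop :=
  ∀ t, |f (t + τ) - f t| ≤ δ

namespace IsTranslationNumber

variable {f g : ℝ → ℝ} {δ δ' τ : ℝ}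

theorem mono (hf : IsTranslationNumber f δ τ) (hδ : δ ≤ δ') : IsTranslationNumber f δ' τ :=
  fun t => (hf t).trans hδ

theorem add (hf : IsTranslationNumber f δ τ) (hg : IsTranslationNumber g δ' τ) :
    IsTranslationNumber (fun t => f t + g t) (δ + δ') τ := fun t => by
  simpa only [Real.dist_eq] using
    (dist_add_add_le (f (t + τ)) (g (t + τ)) (f t) (g t)).trans
      (add_le_add (hf t) (hg t))

theorem sub (hf : IsTranslationNumber f δ τ) (hg : IsTranslationNumber g δ' τ) :
    IsTranslationNumber (fun t => f t - g t) (δ + δ') τ := fun t => by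
  simpa only [Real.dist_eq] using
    (dist_sub_sub_le (f (t + τ)) (g (t + τ)) (f t) (g t)).trans
      (add_le_add (hf t) (hg t))

theorem neg (hf : IsTranslationNumber f δ τ) : IsTranslationNumber (fun t => -f t) δ τ :=
  fun t => by simpa only [neg_sub_neg, abs_sub_comm] using hf t

theorem const_mul (hf : IsTranslationNumber f δ τ) (c : ℝ) :
    IsTranslationNumber (fun t => c * f t) (|c| * δ) τ := fun t => by
  rw [← mul_sub, abs_mul]
  exact mul_le_mul_of_nonneg_left (hf t) (abs_nonneg c)

theorem comp_neg (hf : IsTranslationNumber f δ τ) : IsTranslationNumber (fun t => f (-t)) δ τ :=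
  fun t => by simpa only [abs_sub_comm, neg_add_cancel_right, neg_add] using hf (-(t + τ))

end IsTranslationNumber

namespace AlmostPeriodic

variable {g : ℝ → ℝ}

theorem exists_abs_le (hg : AlmostPeriodic g) : ∃ M, ∀ t, |g t| ≤ M := by
  obtain ⟨L, -, hL⟩ := hg.2 1 one_pos
  obtain ⟨C, hC⟩ := (isCompact_Icc (a := 0) (b := L)).exists_bound_of_continuousOn
    hg.1.continuousOn
  refine ⟨C + 1, fun t => ?_⟩
  obtain ⟨τ, hτ, hτL⟩ := hL (-t)
  have hgC : |g (t + τ)| ≤ C := hC _ ⟨by linarith [hτL.1], by linarith [hτL.2]⟩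
  linarith [hτ t, abs_sub_abs_le_abs_sub (g t) (g (t + τ)), abs_sub_comm (g t) (g (t + τ))]

theorem of_translation_bound {x : ℝ → ℝ} {K : ℝ} (hg : AlmostPeriodic g) (hx : Continuous x)
    (hK : 0 ≤ K)
    (h : ∀ ε > 0, ∀ τ, (∀ t, |g (t + τ) - g t| < ε) → IsTranslationNumber x (K * ε) τ) :
    AlmostPeriodic x := by
  refine ⟨hx, fun ε hε => ?_⟩
  obtain ⟨L, hL, hdense⟩ := hg.2 (ε / (K + 1)) (by positivity)
  refine ⟨L, hL, fun y => ?_⟩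
  obtain ⟨τ, hτ, hτL⟩ := hdense y
  refine ⟨τ, fun t => (h _ (by positivity) τ hτ t).trans_lt ?_, hτL⟩
  rw [← mul_div_assoc, div_lt_iff₀ (by positivity)]
  linarith

end AlmostPeriodic

noncomputable def expWeightedIntegral (c σ : ℝ) (ψ : ℝ → ℝ) (t : ℝ) : ℝ :=
  ∫ u in Ioi 0, Real.exp (-c * u) * ψ (t + σ * u)

section expWeightedIntegral

variable {c M : ℝ} {ψ : ℝ → ℝ}

theorem setIntegral_Ioi_exp_mul (c t : ℝ) (ψ : ℝ → ℝ) :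
    ∫ s in Ioi t, Real.exp (c * (t - s)) * ψ s = expWeightedIntegral c 1 ψ t := by
  rw [← (measurePreserving_add_left volume t).setIntegral_preimage_emb
    (measurableEmbedding_addLeft t)]
  simp [expWeightedIntegral]

theorem setIntegral_Iio_exp_mul (c t : ℝ) (ψ : ℝ → ℝ) :
    ∫ s in Iio t, Real.exp (-c * (t - s)) * ψ s = expWeightedIntegral c (-1) ψ t := by
  rw [← integral_Iic_eq_integral_Iio, ← neg_neg t, ← integral_comp_neg_Ioi,
    ← (measurePreserving_add_left volume (-t)).setIntegral_preimage_emb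
      (measurableEmbedding_addLeft (-t))]
  simp [expWeightedIntegral, sub_eq_add_neg, add_comm]

theorem expWeightedIntegral_add_right (c σ : ℝ) (ψ : ℝ → ℝ) (t τ : ℝ) :
    expWeightedIntegral c σ ψ (t + τ) = expWeightedIntegral c σ (fun s => ψ (s + τ)) t := by
  simp only [expWeightedIntegral, add_right_comm t τ]

theorem abs_exp_mul_le (hM : ∀ s, |ψ s| ≤ M) (c u s : ℝ) :
    |Real.exp (-c * u) * ψ s| ≤ M * Real.exp (-c * u) := by
  rw [abs_mul, abs_of_pos (Real.exp_pos _), mul_comm]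
  exact mul_le_mul_of_nonneg_right (hM s) (Real.exp_pos _).le

theorem integrableOn_exp_mul (hc : 0 < c) (hψ : Continuous ψ) (hM : ∀ s, |ψ s| ≤ M)
    (σ t : ℝ) : IntegrableOn (fun u => Real.exp (-c * u) * ψ (t + σ * u)) (Ioi 0) :=
  ((exp_neg_integrableOn_Ioi 0 hc).const_mul M).mono'
    (by fun_prop : Continuous fun u => Real.exp (-c * u) * ψ (t + σ * u)).aestronglyMeasurable
    (ae_of_all _ fun u => abs_exp_mul_le hM c u _)

theorem abs_expWeightedIntegral_le (hc : 0 < c) (hM : ∀ s, |ψ s| ≤ M) (σ t : ℝ) :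
    |expWeightedIntegral c σ ψ t| ≤ M / c := by
  calc |expWeightedIntegral c σ ψ t|
      ≤ ∫ u in Ioi 0, M * Real.exp (-c * u) :=
        norm_integral_le_of_norm_le (f := fun u => Real.exp (-c * u) * ψ (t + σ * u))
          ((exp_neg_integrableOn_Ioi 0 hc).const_mul M)
          (ae_of_all _ fun u => abs_exp_mul_le hM c u _)
    _ = M / c := by
        rw [integral_const_mul, integral_exp_mul_Ioi (by linarith) 0]
        simp [div_eq_mul_inv]

theorem expWeightedIntegral_sub (hc : 0 < c) {ψ₁ ψ₂ : ℝ → ℝ} {M₁ M₂ : ℝ}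
    (hψ₁ : Continuous ψ₁) (hM₁ : ∀ s, |ψ₁ s| ≤ M₁) (hψ₂ : Continuous ψ₂)
    (hM₂ : ∀ s, |ψ₂ s| ≤ M₂) (σ t : ℝ) :
    expWeightedIntegral c σ ψ₁ t - expWeightedIntegral c σ ψ₂ t =
      expWeightedIntegral c σ (fun s => ψ₁ s - ψ₂ s) t := by
  rw [expWeightedIntegral, expWeightedIntegral, ← integral_sub
    (integrableOn_exp_mul hc hψ₁ hM₁ σ t) (integrableOn_exp_mul hc hψ₂ hM₂ σ t)]
  simp only [expWeightedIntegral, mul_sub]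

theorem continuous_expWeightedIntegral (hc : 0 < c) (hψ : Continuous ψ)
    (hM : ∀ s, |ψ s| ≤ M) (σ : ℝ) : Continuous (expWeightedIntegral c σ ψ) :=
  continuous_of_dominated
    (fun t => (by fun_prop :
      Continuous fun u => Real.exp (-c * u) * ψ (t + σ * u)).aestronglyMeasurable)
    (fun t => ae_of_all _ fun u => abs_exp_mul_le hM c u _)
    ((exp_neg_integrableOn_Ioi 0 hc).const_mul M)
    (ae_of_all _ fun u => by fun_prop)

theorem IsTranslationNumber.expWeightedIntegral {δ τ : ℝ} (hc : 0 < c) (hψ : Continuous ψ)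
    (hM : ∀ s, |ψ s| ≤ M) (h : IsTranslationNumber ψ δ τ) (σ : ℝ) :
    IsTranslationNumber (expWeightedIntegral c σ ψ) (δ / c) τ := fun t => by
  rw [expWeightedIntegral_add_right,
    expWeightedIntegral_sub hc (by fun_prop) (fun s => hM (s + τ)) hψ hM]
  exact abs_expWeightedIntegral_le hc h σ t

end expWeightedIntegral

section reflection

variable {g : ℝ → ℝ} {M : ℝ}

theorem abs_add_comp_neg_le (hM : ∀ s, |g s| ≤ M) (s : ℝ) : |g s + g (-s)| ≤ M + M :=
  (abs_add_le _ _).trans (add_le_add (hM s) (hM (-s)))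

theorem abs_neg_add_comp_neg_le (hM : ∀ s, |g s| ≤ M) (s : ℝ) : |-g s + g (-s)| ≤ M + M :=
  (abs_add_le _ _).trans (add_le_add ((abs_neg _).trans_le (hM s)) (hM (-s)))

theorem abs_sub_comp_neg_le (hM : ∀ s, |g s| ≤ M) (s : ℝ) : |g s - g (-s)| ≤ M + M :=
  (abs_sub _ _).trans (add_le_add (hM s) (hM (-s)))

end reflection

noncomputable def reflectedExpIntegral (α β : ℝ) (g : ℝ → ℝ) (t : ℝ) : ℝ :=
  (∫ s in Ioi t, Real.exp (α * (t - s)) * (g s + g (-s))) +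
  (∫ s in Iio t, Real.exp (-α * (t - s)) * (g s + g (-s))) +
  β * (∫ s in Ioi t, Real.exp (β * (t - s)) * (-g s + g (-s))) +
  β * (∫ s in Iio t, Real.exp (-β * (t - s)) * (g s - g (-s)))

theorem reflectedExpIntegral_eq (α β : ℝ) (g : ℝ → ℝ) :
    reflectedExpIntegral α β g = fun t =>
      expWeightedIntegral α 1 (fun s => g s + g (-s)) t +
      expWeightedIntegral α (-1) (fun s => g s + g (-s)) t +
      β * expWeightedIntegral β 1 (fun s => -g s + g (-s)) t +
      β * expWeightedIntegral β (-1) (fun s => g s - g (-s)) t := by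
  funext t
  rw [reflectedExpIntegral, setIntegral_Ioi_exp_mul, setIntegral_Iio_exp_mul,
    setIntegral_Ioi_exp_mul, setIntegral_Iio_exp_mul]

section reflectedExpIntegral

variable {α β M : ℝ} {g : ℝ → ℝ}

theorem continuous_reflectedExpIntegral (hα : 0 < α) (hβ : 0 < β) (hg : Continuous g)
    (hM : ∀ s, |g s| ≤ M) : Continuous (reflectedExpIntegral α β g) := by
  have := continuous_expWeightedIntegral hα (by fun_prop) (abs_add_comp_neg_le hM) 1
  have := continuous_expWeightedIntegral hα (by fun_prop) (abs_add_comp_neg_le hM) (-1)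
  have := continuous_expWeightedIntegral hβ (by fun_prop) (abs_neg_add_comp_neg_le hM) 1
  have := continuous_expWeightedIntegral hβ (by fun_prop) (abs_sub_comp_neg_le hM) (-1)
  rw [reflectedExpIntegral_eq]
  fun_prop

theorem IsTranslationNumber.reflectedExpIntegral {ε τ : ℝ} (hα : 0 < α) (hβ : 0 < β)
    (hg : Continuous g) (hM : ∀ s, |g s| ≤ M) (hτ : IsTranslationNumber g ε τ) :
    IsTranslationNumber (reflectedExpIntegral α β g) (4 * (1 / α + 1) * ε) τ := by
  have hτ₁ := (hτ.add hτ.comp_neg).expWeightedIntegral hα (by fun_prop)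
    (abs_add_comp_neg_le hM)
  have hτ₂ := (hτ.neg.add hτ.comp_neg).expWeightedIntegral hβ (by fun_prop)
    (abs_neg_add_comp_neg_le hM) 1
  have hτ₃ := (hτ.sub hτ.comp_neg).expWeightedIntegral hβ (by fun_prop)
    (abs_sub_comp_neg_le hM) (-1)
  rw [reflectedExpIntegral_eq]
  refine (((hτ₁ 1).add (hτ₁ (-1))).add (hτ₂.const_mul β)).add (hτ₃.const_mul β) |>.mono ?_
  rw [abs_of_pos hβ, mul_div_cancel₀ _ hβ.ne']
  exact le_of_eq (by field_simp; ring)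

end reflectedExpIntegral

theorem formula_almost_periodic_general (a b : ℝ) (hab : a < b) (hba : b < -a)
    (α β : ℝ) (hα : α = Real.sqrt (b - a)) (hβ : β = Real.sqrt (-a - b))
    (g : ℝ → ℝ) (hg : AlmostPeriodic g)
    (x : ℝ → ℝ)
    (hx : ∀ t, x t =
      (∫ s in Set.Ioi t, Real.exp (α * (t - s)) * (g s + g (-s))) +
      (∫ s in Set.Iio t, Real.exp (-α * (t - s)) * (g s + g (-s))) +
      β * (∫ s in Set.Ioi t, Real.exp (β * (t - s)) * (-g s + g (-s))) +
      β * (∫ s in Set.Iio t, Real.exp (-β * (t - s)) * (g s - g (-s)))) :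
    AlmostPeriodic x ∧
      ∀ ε > 0, ∀ τ : ℝ, (∀ t : ℝ, |g (t + τ) - g t| < ε) →
        ∀ t : ℝ, |x (t + τ) - x t| ≤ 4 * (1 / α + 1) * ε := by
  have hα0 : 0 < α := hα ▸ Real.sqrt_pos.mpr (by linarith)
  have hβ0 : 0 < β := hβ ▸ Real.sqrt_pos.mpr (by linarith)
  obtain ⟨M, hM⟩ := hg.exists_abs_le
  obtain rfl : x = reflectedExpIntegral α β g := funext hx
  have hbound : ∀ ε > 0, ∀ τ : ℝ, (∀ t, |g (t + τ) - g t| < ε) →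
      IsTranslationNumber (reflectedExpIntegral α β g) (4 * (1 / α + 1) * ε) τ :=
    fun _ _ _ hτ => IsTranslationNumber.reflectedExpIntegral hα0 hβ0 hg.1 hM fun t => (hτ t).le
  exact ⟨hg.of_translation_bound (continuous_reflectedExpIntegral hα0 hβ0 hg.1 hM)
    (by positivity) hbound, hbound⟩

theorem formula_almost_periodic (a b : ℝ) (hb : b ≠ 0) (hab : a < b) (hba : b < -a)
    (α β : ℝ) (hα : α = Real.sqrt (b - a)) (hβ : β = Real.sqrt (-a - b))
    (g : ℝ → ℝ) (hg : AlmostPeriodic g)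
    (x : ℝ → ℝ)
    (hx : ∀ t, x t =
      (∫ s in Set.Ioi t, Real.exp (α * (t - s)) * (g s + g (-s))) +
      (∫ s in Set.Iio t, Real.exp (-α * (t - s)) * (g s + g (-s))) +
      β * (∫ s in Set.Ioi t, Real.exp (β * (t - s)) * (-g s + g (-s))) +
      β * (∫ s in Set.Iio t, Real.exp (-β * (t - s)) * (g s - g (-s)))) :
    AlmostPeriodic x ∧
      ∀ ε > 0, ∀ τ : ℝ, (∀ t : ℝ, |g (t + τ) - g t| < ε) →
        ∀ t : ℝ, |x (t + τ) - x t| ≤ 4 * (1 / α + 1) * ε :=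
  formula_almost_periodic_general a b hab hba α β hα hβ g hg x hx
end

section
/- Let a, b ∈ ℝ with b ≠ 0 and a < b < -a, set α = √(b−a), β = √(−a−b), and suppose g : ℝ → ℝ is continuous and ω-periodic. Then the bounded solution x(t) = ∫_t^∞ e^{α(t−s)}(g(s)+g(−s)) ds + ∫_{−∞}^t e^{−α(t−s)}(g(s)+g(−s)) ds + β∫_t^∞ e^{β(t−s)}(−g(s)+g(−s)) ds + β∫_{−∞}^t e^{−β(t−s)}(g(s)−g(−s)) ds of x''(t) + a x(t) + b x(−t) = g(t) is also ω-periodic. -/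
/-!
Each of the four integrals has the form `t ↦ ∫ s in Ioi t (or Iio t), K (t - s) * h s` with `h`
built from `s ↦ g s` and `s ↦ g (-s)`, both `ω`-periodic. Translating the integration variable
by `ω` turns the integral at `t + ω` into the integral at `t`, since `K (t - s)` only sees the
difference and `h (s + ω) = h s`.
-/

open MeasureTheory Set Function

section

variable {E : Type*} [NormedAddCommGroup E] [NormedSpace ℝ E]

theorem setIntegral_Ioi_comp_add_right (f : ℝ → E) (c d : ℝ) :
    ∫ s in Ioi c, f (s + d) = ∫ s in Ioi (c + d), f s := by
  rw [← (measurePreserving_add_right volume d).setIntegral_preimage_emb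
    (measurableEmbedding_addRight d) f, preimage_add_const_Ioi, add_sub_cancel_right]

theorem setIntegral_Iio_comp_add_right (f : ℝ → E) (c d : ℝ) :
    ∫ s in Iio c, f (s + d) = ∫ s in Iio (c + d), f s := by
  rw [← (measurePreserving_add_right volume d).setIntegral_preimage_emb
    (measurableEmbedding_addRight d) f, preimage_add_const_Iio, add_sub_cancel_right]

variable {F : ℝ → ℝ → E} {ω : ℝ}

theorem periodic_setIntegral_Ioi (hF : ∀ t s, F (t + ω) (s + ω) = F t s) :
    Periodic (fun t => ∫ s in Ioi t, F t s) ω := fun t => by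
  simp only [← setIntegral_Ioi_comp_add_right, hF]

theorem periodic_setIntegral_Iio (hF : ∀ t s, F (t + ω) (s + ω) = F t s) :
    Periodic (fun t => ∫ s in Iio t, F t s) ω := fun t => by
  simp only [← setIntegral_Iio_comp_add_right, hF]

end

namespace Function.Periodic

variable {h : ℝ → ℝ} {ω : ℝ}

theorem setIntegral_Ioi_kernel_mul (hh : Periodic h ω) (K : ℝ → ℝ) :
    Periodic (fun t => ∫ s in Ioi t, K (t - s) * h s) ω :=
  periodic_setIntegral_Ioi fun t s => by rw [add_sub_add_right_eq_sub, hh]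

theorem setIntegral_Iio_kernel_mul (hh : Periodic h ω) (K : ℝ → ℝ) :
    Periodic (fun t => ∫ s in Iio t, K (t - s) * h s) ω :=
  periodic_setIntegral_Iio fun t s => by rw [add_sub_add_right_eq_sub, hh]

end Function.Periodic

theorem formula_periodic_general
    (α β : ℝ)
    (ω : ℝ) (g : ℝ → ℝ) (hgper : ∀ t : ℝ, g (t + ω) = g t)
    (x : ℝ → ℝ)
    (hx : ∀ t, x t =
      (∫ s in Set.Ioi t, Real.exp (α * (t - s)) * (g s + g (-s))) +
      (∫ s in Set.Iio t, Real.exp (-α * (t - s)) * (g s + g (-s))) +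
      β * (∫ s in Set.Ioi t, Real.exp (β * (t - s)) * (-g s + g (-s))) +
      β * (∫ s in Set.Iio t, Real.exp (-β * (t - s)) * (g s - g (-s)))) :
    ∀ t : ℝ, x (t + ω) = x t := by
  have hg : Periodic g ω := hgper
  have hg_neg : Periodic (fun s => g (-s)) ω := fun s => by
    simpa only [neg_add] using hg.neg (-s)
  have h_even : Periodic (fun s => g s + g (-s)) ω := hg.add hg_neg
  have h_odd : Periodic (fun s => g s - g (-s)) ω := hg.sub hg_neg
  have h_odd' : Periodic (fun s => -g s + g (-s)) ω := (hg.comp Neg.neg).add hg_neg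
  rw [funext hx]
  exact (((h_even.setIntegral_Ioi_kernel_mul fun u => Real.exp (α * u)).add
    (h_even.setIntegral_Iio_kernel_mul fun u => Real.exp (-α * u))).add
    ((h_odd'.setIntegral_Ioi_kernel_mul fun u => Real.exp (β * u)).smul β)).add
    ((h_odd.setIntegral_Iio_kernel_mul fun u => Real.exp (-β * u)).smul β)

theorem formula_periodic (a b : ℝ) (hb : b ≠ 0) (hab : a < b) (hba : b < -a)
    (α β : ℝ) (hα : α = Real.sqrt (b - a)) (hβ : β = Real.sqrt (-a - b))
    (ω : ℝ) (g : ℝ → ℝ) (hg : Continuous g) (hgper : ∀ t : ℝ, g (t + ω) = g t)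
    (x : ℝ → ℝ)
    (hx : ∀ t, x t =
      (∫ s in Set.Ioi t, Real.exp (α * (t - s)) * (g s + g (-s))) +
      (∫ s in Set.Iio t, Real.exp (-α * (t - s)) * (g s + g (-s))) +
      β * (∫ s in Set.Ioi t, Real.exp (β * (t - s)) * (-g s + g (-s))) +
      β * (∫ s in Set.Iio t, Real.exp (-β * (t - s)) * (g s - g (-s)))) :
    ∀ t : ℝ, x (t + ω) = x t :=
  formula_periodic_general α β ω g hgper x hx
end

section
/- Every twice differentiable solution x : ℝ → ℝ of the equation x''(t) + 4x(t) + 2x(−t) = cos(2t) is bounded and almost periodic on ℝ. -/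
lemma RelativelyDense.mono {S T : Set ℝ} (hS : RelativelyDense S) (hST : S ⊆ T) :
    RelativelyDense T :=
  let ⟨L, hL, h⟩ := hS
  ⟨L, hL, fun x => let ⟨τ, hτS, hτ⟩ := h x; ⟨τ, hST hτS, hτ⟩⟩

section AlmostPeriodicity

open Complex

lemma norm_exp_mul_I_sub_exp_mul_I (a b : ℝ) :
    ‖exp (a * I) - exp (b * I)‖ = ‖exp (↑(a - b) * I) - 1‖ := by
  have h : exp (a * I) - exp (b * I) = exp (b * I) * (exp (↑(a - b) * I) - 1) := by
    rw [mul_sub, mul_one, ← Complex.exp_add]; push_cast; ring_nf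
  rw [h, norm_mul, norm_exp_ofReal_mul_I, one_mul]

lemma relativelyDense_setOf_norm_exp_mul_I_sub_one_lt {ι : Type*} [Fintype ι] (ω : ι → ℝ)
    {δ : ℝ} (hδ : 0 < δ) :
    RelativelyDense {τ | ∀ i, ‖exp (↑(ω i * τ) * I) - 1‖ < δ} := by
  set F : ℝ → ι → ℂ := fun t i => exp (↑(ω i * t) * I)
  have hbdd : Set.range F ⊆ Metric.closedBall 0 1 := by
    rintro _ ⟨t, rfl⟩
    rw [mem_closedBall_zero_iff, pi_norm_le_iff_of_nonneg zero_le_one]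
    exact fun i => (norm_exp_ofReal_mul_I _).le
  obtain ⟨Y, hYF, hYfin, hYcov⟩ := Metric.finite_approx_of_totallyBounded
    ((isCompact_closedBall _ _).totallyBounded.subset hbdd) δ hδ
  obtain ⟨R, rfl, hRinj⟩ := Set.exists_image_eq_injOn_of_subset_range hYF
  obtain ⟨T, hT, hRT⟩ := (hYfin.of_finite_image hRinj).isBounded.exists_pos_norm_le
  refine ⟨2 * T, by positivity, fun x₀ => ?_⟩
  obtain ⟨_, ⟨q, hqR, rfl⟩, hpq⟩ := Set.mem_iUnion₂.1 (hYcov (Set.mem_range_self (x₀ + T)))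
  have hq := abs_le.1 (hRT q hqR)
  refine ⟨x₀ + T - q, fun i => ?_, by constructor <;> linarith⟩
  calc ‖exp (↑(ω i * (x₀ + T - q)) * I) - 1‖
      = dist (F (x₀ + T) i) (F q i) := by
        rw [dist_eq_norm, norm_exp_mul_I_sub_exp_mul_I]; ring_nf
    _ ≤ dist (F (x₀ + T)) (F q) := dist_le_pi_dist _ _ i
    _ < δ := hpq

section RealTrigPolynomial

variable {ι : Type*} [Fintype ι] (c : ι → ℂ) (ω : ι → ℝ)

noncomputable def realTrigPolynomial (t : ℝ) : ℝ :=
  (∑ i, c i * exp (↑(ω i * t) * I)).re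

lemma continuous_realTrigPolynomial : Continuous (realTrigPolynomial c ω) := by
  unfold realTrigPolynomial; fun_prop

lemma abs_realTrigPolynomial_le (t : ℝ) : |realTrigPolynomial c ω t| ≤ ∑ i, ‖c i‖ :=
  calc |realTrigPolynomial c ω t| ≤ ‖∑ i, c i * exp (↑(ω i * t) * I)‖ := abs_re_le_norm _
    _ ≤ ∑ i, ‖c i * exp (↑(ω i * t) * I)‖ := norm_sum_le _ _
    _ = ∑ i, ‖c i‖ := by simp only [norm_mul, norm_exp_ofReal_mul_I, mul_one]

lemma abs_realTrigPolynomial_add_sub_le (t τ : ℝ) :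
    |realTrigPolynomial c ω (t + τ) - realTrigPolynomial c ω t|
      ≤ ∑ i, ‖c i‖ * ‖exp (↑(ω i * τ) * I) - 1‖ := by
  have hsplit : realTrigPolynomial c ω (t + τ) - realTrigPolynomial c ω t
      = (∑ i, c i * exp (↑(ω i * t) * I) * (exp (↑(ω i * τ) * I) - 1)).re := by
    rw [realTrigPolynomial, realTrigPolynomial, ← sub_re, ← Finset.sum_sub_distrib]
    congr 1
    refine Finset.sum_congr rfl fun i _ => ?_
    rw [mul_sub, mul_one, mul_assoc, ← Complex.exp_add]
    push_cast; ring_nf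
  rw [hsplit]
  calc _ ≤ ‖∑ i, c i * exp (↑(ω i * t) * I) * (exp (↑(ω i * τ) * I) - 1)‖ := abs_re_le_norm _
    _ ≤ ∑ i, ‖c i * exp (↑(ω i * t) * I) * (exp (↑(ω i * τ) * I) - 1)‖ := norm_sum_le _ _
    _ = _ := by simp only [norm_mul, norm_exp_ofReal_mul_I, mul_one]

theorem almostPeriodic_realTrigPolynomial : AlmostPeriodic (realTrigPolynomial c ω) := by
  refine ⟨continuous_realTrigPolynomial c ω, fun ε hε => ?_⟩
  set K := ∑ i, ‖c i‖ + 1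
  have hK : 0 < K := by positivity
  refine (relativelyDense_setOf_norm_exp_mul_I_sub_one_lt ω (div_pos hε hK)).mono
    fun τ hτ t => ?_
  calc _ ≤ ∑ i, ‖c i‖ * ‖exp (↑(ω i * τ) * I) - 1‖ := abs_realTrigPolynomial_add_sub_le c ω t τ
    _ ≤ ∑ i, ‖c i‖ * (ε / K) := by gcongr with i; exact (hτ i).le
    _ < K * (ε / K) := by rw [← Finset.sum_mul]; gcongr; linarith
    _ = ε := mul_div_cancel₀ ε hK.ne'

end RealTrigPolynomial

end AlmostPeriodicity

open Real

section HarmonicOscillator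

variable {f f' : ℝ → ℝ} {ω : ℝ}

lemma eq_zero_of_harmonic_of_initial_eq_zero (hω : ω ≠ 0) (hf : ∀ t, HasDerivAt f (f' t) t)
    (hf' : ∀ t, HasDerivAt f' (-ω ^ 2 * f t) t) (h₀ : f 0 = 0) (h₀' : f' 0 = 0) (t : ℝ) :
    f t = 0 := by
  set E : ℝ → ℝ := fun s => f' s ^ 2 + ω ^ 2 * f s ^ 2
  have hE : ∀ s, HasDerivAt E 0 s := fun s =>
    (((hf' s).pow 2).add (((hf s).pow 2).const_mul (ω ^ 2))).congr_deriv (by ring)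
  have hEt : E t = E 0 :=
    is_const_of_deriv_eq_zero (fun s => (hE s).differentiableAt) (fun s => (hE s).deriv) t 0
  simp only [E, h₀, h₀'] at hEt
  have hωf : ω ^ 2 * f t ^ 2 = 0 := by
    linarith [sq_nonneg (f' t), mul_nonneg (sq_nonneg ω) (sq_nonneg (f t))]
  simpa [hω] using hωf

lemma hasDerivAt_cos_mul (ω t : ℝ) :
    HasDerivAt (fun s => cos (ω * s)) (-ω * sin (ω * t)) t :=
  (((hasDerivAt_id' t).const_mul ω).cos).congr_deriv (by ring)

lemma hasDerivAt_sin_mul (ω t : ℝ) :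
    HasDerivAt (fun s => sin (ω * s)) (ω * cos (ω * t)) t :=
  (((hasDerivAt_id' t).const_mul ω).sin).congr_deriv (by ring)

theorem eq_cos_add_sin_of_harmonic (hω : ω ≠ 0) (hf : ∀ t, HasDerivAt f (f' t) t)
    (hf' : ∀ t, HasDerivAt f' (-ω ^ 2 * f t) t) (t : ℝ) :
    f t = f 0 * cos (ω * t) + f' 0 / ω * sin (ω * t) := by
  set A := f 0
  set B := f' 0 / ω
  have hdiff : ∀ s, HasDerivAt (fun s => f s - (A * cos (ω * s) + B * sin (ω * s)))
      (f' s - (-A * ω * sin (ω * s) + B * ω * cos (ω * s))) s := fun s =>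
    ((hf s).sub (((hasDerivAt_cos_mul ω s).const_mul A).add
      ((hasDerivAt_sin_mul ω s).const_mul B))).congr_deriv (by ring)
  have hdiff' : ∀ s, HasDerivAt (fun s => f' s - (-A * ω * sin (ω * s) + B * ω * cos (ω * s)))
      (-ω ^ 2 * (f s - (A * cos (ω * s) + B * sin (ω * s)))) s := fun s =>
    ((hf' s).sub (((hasDerivAt_sin_mul ω s).const_mul (-A * ω)).add
      ((hasDerivAt_cos_mul ω s).const_mul (B * ω)))).congr_deriv (by ring)
  have h := eq_zero_of_harmonic_of_initial_eq_zero hω hdiff hdiff'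
    (by simp [A]) (by simp [B, hω]) t
  linarith

end HarmonicOscillator

section ReflectionEquation

variable {x x' x'' g : ℝ → ℝ} {a b : ℝ}

lemma hasDerivAt_comp_neg {f f' : ℝ → ℝ} (hf : ∀ t, HasDerivAt f (f' t) t) (t : ℝ) :
    HasDerivAt (fun s => f (-s)) (-f' (-t)) t :=
  ((hf (-t)).comp t (hasDerivAt_neg t)).congr_deriv (by ring)

lemma hasDerivAt_even_part (hx : ∀ t, HasDerivAt x (x' t) t) (t : ℝ) :
    HasDerivAt (fun s => (x s + x (-s)) / 2) ((x' t - x' (-t)) / 2) t :=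
  (((hx t).add (hasDerivAt_comp_neg hx t)).div_const 2).congr_deriv (by ring)

lemma hasDerivAt_odd_part (hx : ∀ t, HasDerivAt x (x' t) t) (t : ℝ) :
    HasDerivAt (fun s => (x s - x (-s)) / 2) ((x' t + x' (-t)) / 2) t :=
  (((hx t).sub (hasDerivAt_comp_neg hx t)).div_const 2).congr_deriv (by ring)

lemma hasDerivAt_deriv_even_part_of_reflection (hx' : ∀ t, HasDerivAt x' (x'' t) t)
    (heq : ∀ t, x'' t + a * x t + b * x (-t) = g t) (t : ℝ) :
    HasDerivAt (fun s => (x' s - x' (-s)) / 2)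
      (-(a + b) * ((x t + x (-t)) / 2) + (g t + g (-t)) / 2) t := by
  refine (((hx' t).sub (hasDerivAt_comp_neg hx' t)).div_const 2).congr_deriv ?_
  have := heq (-t); rw [neg_neg] at this
  linarith [heq t]

lemma hasDerivAt_deriv_odd_part_of_reflection (hx' : ∀ t, HasDerivAt x' (x'' t) t)
    (heq : ∀ t, x'' t + a * x t + b * x (-t) = g t) (t : ℝ) :
    HasDerivAt (fun s => (x' s + x' (-s)) / 2)
      (-(a - b) * ((x t - x (-t)) / 2) + (g t - g (-t)) / 2) t := by
  refine (((hx' t).add (hasDerivAt_comp_neg hx' t)).div_const 2).congr_deriv ?_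
  have := heq (-t); rw [neg_neg] at this
  linarith [heq t]

end ReflectionEquation

section ReflectionExample

variable {x x' x'' : ℝ → ℝ} (hx : ∀ t, HasDerivAt x (x' t) t)
  (hx' : ∀ t, HasDerivAt x' (x'' t) t)
  (heq : ∀ t, x'' t + 4 * x t + 2 * x (-t) = cos (2 * t))
include hx hx' heq

lemma reflection_example_odd_part_eq (t : ℝ) :
    (x t - x (-t)) / 2 = x' 0 / √2 * sin (√2 * t) := by
  have hosc := eq_cos_add_sin_of_harmonic (ω := √2) (by positivity) (hasDerivAt_odd_part hx)
    (fun s => (hasDerivAt_deriv_odd_part_of_reflection hx' heq s).congr_deriv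
      (by rw [sq_sqrt zero_le_two, mul_neg, cos_neg]; ring)) t
  simpa using hosc

lemma reflection_example_even_part_eq (t : ℝ) :
    (x t + x (-t)) / 2 = (x 0 - 1 / 2) * cos (√6 * t) + cos (2 * t) / 2 := by
  -- `cos (2t) / 2` is the particular solution of `e'' + 6 e = cos 2t`
  have hosc := eq_cos_add_sin_of_harmonic (ω := √6) (by positivity)
    (f := fun s => (x s + x (-s)) / 2 - cos (2 * s) / 2)
    (f' := fun s => (x' s - x' (-s)) / 2 + sin (2 * s))
    (fun s => ((hasDerivAt_even_part hx s).sub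
      ((hasDerivAt_cos_mul 2 s).div_const 2)).congr_deriv (by ring))
    (fun s => ((hasDerivAt_deriv_even_part_of_reflection hx' heq s).add
      (hasDerivAt_sin_mul 2 s)).congr_deriv
        (by rw [sq_sqrt (by norm_num : (0 : ℝ) ≤ 6), mul_neg, cos_neg]; ring)) t
  norm_num at hosc
  linarith

lemma reflection_example_eq_realTrigPolynomial :
    x = realTrigPolynomial
      ![((x 0 - 1 / 2 : ℝ) : ℂ), -((x' 0 / √2 : ℝ) : ℂ) * Complex.I, 1 / 2] ![√6, √2, 2] := by
  funext t
  rw [show x t = (x t + x (-t)) / 2 + (x t - x (-t)) / 2 by ring,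
    reflection_example_even_part_eq hx hx' heq, reflection_example_odd_part_eq hx hx' heq]
  simp only [realTrigPolynomial, Fin.sum_univ_three, Matrix.cons_val_zero, Matrix.cons_val_one,
    Matrix.cons_val_two, Matrix.tail_cons, Matrix.head_cons, Complex.add_re, Complex.mul_re,
    Complex.mul_im, Complex.neg_re, Complex.neg_im, Complex.ofReal_re, Complex.ofReal_im,
    Complex.I_re, Complex.I_im, Complex.div_ofNat_re, Complex.div_ofNat_im, Complex.one_re,
    Complex.one_im, Complex.exp_ofReal_mul_I_re, Complex.exp_ofReal_mul_I_im]
  ring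

end ReflectionExample

theorem reflection_example_bounded (x : ℝ → ℝ)
    (hx1 : Differentiable ℝ x) (hx2 : Differentiable ℝ (deriv x))
    (heq : ∀ t : ℝ, deriv (deriv x) t + 4 * x t + 2 * x (-t) = Real.cos (2 * t)) :
    (∃ M : ℝ, ∀ t : ℝ, |x t| ≤ M) ∧ AlmostPeriodic x := by
  rw [reflection_example_eq_realTrigPolynomial (fun t => (hx1 t).hasDerivAt)
    (fun t => (hx2 t).hasDerivAt) heq]
  exact ⟨⟨_, abs_realTrigPolynomial_le _ _⟩, almostPeriodic_realTrigPolynomial _ _⟩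
end

section
/- Let a, b ∈ ℝ with −a < b < a. For any x₀, x₀' ∈ ℝ, there is at most one twice differentiable solution x : ℝ → ℝ of the homogeneous equation x''(t) + a·x(t) + b·x(−t) = 0 with x(0) = x₀ and x'(0) = x₀'. -/
/-!
Put `u(t) = (y(-t), y(t))`. The equation reads `u'' = -M u` with `M = [[a, b], [b, a]]`
symmetric, so the energy `|u'|² + ⟨M u, u⟩` is conserved; `-a < b < a` says exactly that `M`
is positive definite, so a solution with zero initial data has zero energy and vanishes.
Uniqueness follows by linearity.
-/

namespace ReflectedOscillator

variable {a b : ℝ} {y z : ℝ → ℝ}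

-- `deriv` is junk (zero) where `y` is not differentiable, so every lemma also assumes
-- differentiability of `y` and `deriv y`.
def IsSolution (a b : ℝ) (y : ℝ → ℝ) : Prop :=
  ∀ t, deriv (deriv y) t + a * y t + b * y (-t) = 0

theorem IsSolution.sub (hy : IsSolution a b y) (hz : IsSolution a b z)
    (hyd : Differentiable ℝ y) (hyd2 : Differentiable ℝ (deriv y))
    (hzd : Differentiable ℝ z) (hzd2 : Differentiable ℝ (deriv z)) :
    IsSolution a b (y - z) := by
  intro t
  have hderiv : deriv (y - z) = deriv y - deriv z := funext fun s => deriv_sub (hyd s) (hzd s)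
  rw [hderiv, deriv_sub (hyd2 t) (hzd2 t)]
  simp only [Pi.sub_apply]
  linear_combination hy t - hz t

noncomputable def energy (a b : ℝ) (y : ℝ → ℝ) (t : ℝ) : ℝ :=
  deriv y t ^ 2 + deriv y (-t) ^ 2 + (a * y t ^ 2 + a * y (-t) ^ 2 + 2 * b * y t * y (-t))

theorem hasDerivAt_energy (hy : IsSolution a b y) (hyd : Differentiable ℝ y)
    (hyd2 : Differentiable ℝ (deriv y)) (t : ℝ) : HasDerivAt (energy a b y) 0 t := by
  have hneg : HasDerivAt (fun s : ℝ => -s) (-1) t := (hasDerivAt_id t).neg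
  have hy_t := (hyd t).hasDerivAt
  have hy'_t := (hyd2 t).hasDerivAt
  have hy_neg : HasDerivAt (fun s => y (-s)) (deriv y (-t) * -1) t :=
    (hyd (-t)).hasDerivAt.comp t hneg
  have hy'_neg : HasDerivAt (fun s => deriv y (-s)) (deriv (deriv y) (-t) * -1) t :=
    (hyd2 (-t)).hasDerivAt.comp t hneg
  have htotal := ((hy'_t.pow 2).add (hy'_neg.pow 2)).add
    ((((hy_t.pow 2).const_mul a).add ((hy_neg.pow 2).const_mul a)).add
      ((hy_t.const_mul (2 * b)).mul hy_neg))
  refine htotal.congr_deriv ?_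
  have hode_neg := hy (-t)
  rw [neg_neg] at hode_neg
  linear_combination (2 * deriv y t) * hy t - (2 * deriv y (-t)) * hode_neg

theorem energy_eq_energy_zero (hy : IsSolution a b y) (hyd : Differentiable ℝ y)
    (hyd2 : Differentiable ℝ (deriv y)) (t : ℝ) : energy a b y t = energy a b y 0 :=
  is_const_of_deriv_eq_zero (fun s => (hasDerivAt_energy hy hyd hyd2 s).differentiableAt)
    (fun s => (hasDerivAt_energy hy hyd hyd2 s).deriv) t 0

theorem eq_zero_of_quadForm_nonpos (hba : -a < b) (hab : b < a) {u v : ℝ}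
    (h : a * u ^ 2 + a * v ^ 2 + 2 * b * u * v ≤ 0) : u = 0 := by
  -- `a u² + a v² + 2 b u v = ((a + b) (u + v)² + (a - b) (u - v)²) / 2`
  have hsum : (u + v) ^ 2 = 0 := by nlinarith [sq_nonneg (u + v), sq_nonneg (u - v)]
  have hdiff : (u - v) ^ 2 = 0 := by nlinarith [sq_nonneg (u + v), sq_nonneg (u - v)]
  linarith [pow_eq_zero_iff two_ne_zero |>.mp hsum, pow_eq_zero_iff two_ne_zero |>.mp hdiff]

theorem IsSolution.eq_zero (hba : -a < b) (hab : b < a) (hy : IsSolution a b y)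
    (hyd : Differentiable ℝ y) (hyd2 : Differentiable ℝ (deriv y))
    (hy0 : y 0 = 0) (hy'0 : deriv y 0 = 0) : y = 0 := by
  funext t
  have hE := energy_eq_energy_zero hy hyd hyd2 t
  simp only [energy, neg_zero, hy0, hy'0] at hE
  exact eq_zero_of_quadForm_nonpos hba hab (v := y (-t))
    (by nlinarith [sq_nonneg (deriv y t), sq_nonneg (deriv y (-t))])

end ReflectedOscillator

open ReflectedOscillator in
theorem homogeneous_ivp_unique (a b : ℝ) (hba : -a < b) (hab : b < a)
    (x₀ x₀' : ℝ) (x₁ x₂ : ℝ → ℝ)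
    (hx₁d : Differentiable ℝ x₁) (hx₁d2 : Differentiable ℝ (deriv x₁))
    (hx₂d : Differentiable ℝ x₂) (hx₂d2 : Differentiable ℝ (deriv x₂))
    (heq₁ : ∀ t : ℝ, deriv (deriv x₁) t + a * x₁ t + b * x₁ (-t) = 0)
    (heq₂ : ∀ t : ℝ, deriv (deriv x₂) t + a * x₂ t + b * x₂ (-t) = 0)
    (h₁0 : x₁ 0 = x₀) (h₁0' : deriv x₁ 0 = x₀')
    (h₂0 : x₂ 0 = x₀) (h₂0' : deriv x₂ 0 = x₀') :
    x₁ = x₂ := by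
  have hderiv : deriv (x₁ - x₂) = deriv x₁ - deriv x₂ :=
    funext fun s => deriv_sub (hx₁d s) (hx₂d s)
  have hzero : x₁ - x₂ = 0 := by
    refine IsSolution.eq_zero hba hab (IsSolution.sub heq₁ heq₂ hx₁d hx₁d2 hx₂d hx₂d2)
      (hx₁d.sub hx₂d) (hderiv ▸ hx₁d2.sub hx₂d2) ?_ ?_
    · simp [h₁0, h₂0]
    · simp [hderiv, h₁0', h₂0']
  exact sub_eq_zero.mp hzero
end
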